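/- Every subgroup of the even dihedral Artin group $D_{2n}$ that does not contain a non-abelian free subgroup is isomorphic to a subgroup of the Klein bottle group $K = \langle x, y \mid x^2 = y^2 \rangle$. -/

import Mathlib

/-- The relation set for the even dihedral Artin group
`D_{2n} = ⟨a, b ∣ (ab)^n = (ba)^n⟩`, with `true ↦ a`, `false ↦ b`. -/
def dihedralRel (n : ℕ) : Set (FreeGroup Bool) :=
  {(FreeGroup.of true * FreeGroup.of false) ^ n *
    ((FreeGroup.of false * FreeGroup.of true) ^ n)⁻¹}

abbrev DihedralArtin (n : ℕ) := PresentedGroup (dihedralRel n)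

/-- The relation set for the Klein bottle group `K = ⟨x, y ∣ x² = y²⟩`. -/
def kleinRel : Set (FreeGroup Bool) :=
  {(FreeGroup.of true) ^ 2 * ((FreeGroup.of false) ^ 2)⁻¹}

/-- The Klein bottle group. -/
abbrev KleinBottleGroup := PresentedGroup kleinRel

/-!
Writing `p = ab`, the group `D_{2n}` is `F(ZMod n) ⋊ ℤ`, with `xᵢ ↦ pⁱ a p⁻ⁱ` (well defined because
`pⁿ` commutes with `a`) and the generator of `ℤ` mapping to `p` and shifting indices. For a subgroup
`H`, the kernel of the projection `H → ℤ` lies in a free group, so it is free (Nielsen–Schreier), and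
since `H` contains no `F₂` it is trivial or infinite cyclic. If it is trivial, or the projection is
trivial, `H` embeds in `ℤ`. Otherwise `H` is a split extension `ℤ ⋊ ℤ` whose action is trivial or by
negation, and both embed in `ℤ ⋊ ℤ` with the negation action, which is `K` via
`(1, 0) ↦ xy⁻¹`, `(0, 1) ↦ x`.
-/

open Multiplicative SemidirectProduct

theorem commute_mul_pow_of_mul_pow_eq {G : Type*} [Group G] {a b : G} {n : ℕ}
    (h : (a * b) ^ n = (b * a) ^ n) : Commute a ((a * b) ^ n) := by
  have hsc : SemiconjBy a (b * a) (a * b) := by simp [SemiconjBy, mul_assoc]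
  have := hsc.pow_right n
  rwa [← h] at this

theorem MulAut.conj_zpow_apply_eq_of_modEq {G : Type*} [Group G] {a p : G} {n : ℕ}
    (h : Commute a (p ^ n)) {c c' : ℤ} (hc : c ≡ c' [ZMOD n]) :
    MulAut.conj (p ^ c) a = MulAut.conj (p ^ c') a := by
  obtain ⟨s, hs⟩ := hc.symm.dvd
  rw [show c = c' + n * s by omega, zpow_add, zpow_mul, zpow_natCast, map_mul, MulAut.mul_apply,
    MulAut.conj_apply ((p ^ n) ^ s), (h.zpow_right s).symm.eq, mul_inv_cancel_right]

theorem MulAut.zpow_apply_of_apply_eq_inv {G : Type*} [Group G] {A : MulAut G} {u : G}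
    (h : A u = u⁻¹) (m : ℤ) : (A ^ m) u = u ^ (m.negOnePow : ℤ) := by
  have h' : A⁻¹ u = u⁻¹ := by
    rw [MulAut.inv_apply, MulEquiv.symm_apply_eq, map_inv, h, inv_inv]
  induction m using Int.induction_on with
  | zero => simp
  | succ m ih =>
    rw [zpow_add_one, MulAut.mul_apply, h, map_inv, ih, Int.negOnePow_succ, Units.val_neg,
      zpow_neg]
  | pred m ih =>
    rw [zpow_sub_one, MulAut.mul_apply, h', map_inv, ih, Int.negOnePow_sub, Int.negOnePow_one,
      mul_neg_one, Units.val_neg, zpow_neg]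

theorem MulAut.eq_one_or_eq_inv_of_multiplicativeInt (β : MulAut (Multiplicative ℤ)) :
    β = 1 ∨ β = MulEquiv.inv _ := by
  have hpow (α : MulAut (Multiplicative ℤ)) (g) : α g = g ^ toAdd (α (ofAdd 1)) :=
    DFunLike.congr_fun (MonoidHom.ext_mint (f := α.toMonoidHom) (g := zpowGroupHom _)
      (by simp [← ofAdd_zsmul])) g
  have hunit : toAdd (β (ofAdd 1)) * toAdd (β⁻¹ (ofAdd 1)) = 1 := by
    have h := congrArg toAdd (MulAut.mul_apply (M := Multiplicative ℤ) β β⁻¹ (ofAdd 1))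
    rw [mul_inv_cancel, hpow β⁻¹, hpow β, ← zpow_mul] at h
    simpa [mul_comm] using h.symm
  rcases Int.eq_one_or_neg_one_of_mul_eq_one hunit with h | h
  · exact .inl (MulEquiv.ext fun g => by rw [hpow β, h, zpow_one]; rfl)
  · exact .inr (MulEquiv.ext fun g => by rw [hpow β, h, zpow_neg_one]; rfl)

theorem SemidirectProduct.map_injective {N₁ G₁ N₂ G₂ : Type*} [Group N₁] [Group G₁] [Group N₂]
    [Group G₂] {φ₁ : G₁ →* MulAut N₁} {φ₂ : G₂ →* MulAut N₂} {fn : N₁ →* N₂} {fg : G₁ →* G₂}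
    (hfn : Function.Injective fn) (hfg : Function.Injective fg)
    (h : ∀ g : G₁, fn.comp (φ₁ g).toMonoidHom = (φ₂ (fg g)).toMonoidHom.comp fn) :
    Function.Injective (map fn fg h) := fun _ _ hxy =>
  SemidirectProduct.ext (hfn (congrArg left hxy)) (hfg (congrArg right hxy))

theorem SemidirectProduct.exists_injective_ker_rightHom_comp {N G Γ : Type*} [Group N] [Group G]
    [Group Γ] {φ : G →* MulAut N} (f : Γ →* N ⋊[φ] G) (hf : Function.Injective f) :
    ∃ ι : (rightHom.comp f).ker →* N, Function.Injective ι := by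
  have hright (c : (rightHom.comp f).ker) : (f c).right = 1 := c.2
  refine ⟨{ toFun := fun c => (f c).left, map_one' := by simp, map_mul' := fun c d => ?_ }, ?_⟩
  · simp [hright c]
  · intro c d hcd
    exact Subtype.ext (hf (SemidirectProduct.ext hcd ((hright c).trans (hright d).symm)))

noncomputable def MonoidHom.semidirectProductKerEquiv {Γ G : Type*} [Group Γ] [Group G]
    (k : Γ →* G) (s : G →* Γ) (hs : Function.RightInverse s k) :
    k.ker ⋊[MulAut.conjNormal.comp s] G ≃* Γ :=
  MulEquiv.ofBijective
    (SemidirectProduct.lift k.ker.subtype s fun g => by ext; simp [MulAut.conjNormal_apply])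
    ⟨by
      rw [injective_iff_map_eq_one]
      intro x hx
      simp only [SemidirectProduct.lift, MonoidHom.coe_mk, OneHom.coe_mk,
        Subgroup.coe_subtype] at hx
      have hright : x.right = 1 := by
        have := congrArg k hx
        rwa [map_mul, (MonoidHom.mem_ker).1 x.left.2, one_mul, hs, map_one] at this
      have hleft : x.left = 1 := Subtype.ext (by simpa [hright] using hx)
      exact SemidirectProduct.ext hleft hright,
     fun x => ⟨⟨⟨x * (s (k x))⁻¹, by simp [hs (k x)]⟩, k x⟩, by simp [SemidirectProduct.lift]⟩⟩

theorem subsingleton_or_nonempty_mulEquiv_int_of_injective_freeGroup {G X : Type*} [Group G]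
    (ι : G →* FreeGroup X) (hι : Function.Injective ι)
    (hfree : ¬ ∃ f : FreeGroup Bool →* G, Function.Injective f) :
    Subsingleton G ∨ Nonempty (G ≃* Multiplicative ℤ) := by
  let e : G ≃* FreeGroup (IsFreeGroup.Generators ι.range) :=
    (MonoidHom.ofInjective hι).trans (IsFreeGroup.toFreeGroup _)
  have : Subsingleton (IsFreeGroup.Generators ι.range) := by
    by_contra hS
    obtain ⟨s₁, s₂, hne⟩ := not_subsingleton_iff_nontrivial.1 hS |>.exists_pair_ne
    have hinj : Function.Injective fun t : Bool => if t then s₁ else s₂ := by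
      intro t t'; cases t <;> cases t' <;> simp [hne, hne.symm]
    exact hfree ⟨e.symm.toMonoidHom.comp (FreeGroup.map _), e.symm.injective.comp
      (FreeGroup.map_injective hinj)⟩
  rcases isEmpty_or_nonempty (IsFreeGroup.Generators ι.range) with hS | hS
  · exact .inl e.toEquiv.subsingleton
  · have : Unique (IsFreeGroup.Generators ι.range) := uniqueOfSubsingleton hS.some
    exact .inr ⟨e.trans FreeGroup.mulEquivIntOfUnique⟩

def shiftAction (n : ℕ) : Multiplicative ℤ →* MulAut (FreeGroup (ZMod n)) where
  toFun m := FreeGroup.freeGroupCongr (Equiv.addRight ((toAdd m : ℤ) : ZMod n))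
  map_one' := MulEquiv.toMonoidHom_injective <| FreeGroup.ext_hom _ _ fun i => by simp
  map_mul' m m' := MulEquiv.toMonoidHom_injective <| FreeGroup.ext_hom _ _ fun i => by
    simp only [MulEquiv.coe_toMonoidHom, MulAut.mul_apply, FreeGroup.freeGroupCongr_apply,
      FreeGroup.map.of, Equiv.coe_addRight, toAdd_mul, Int.cast_add]
    abel_nf

theorem shiftAction_apply_of (n : ℕ) (m : Multiplicative ℤ) (i : ZMod n) :
    shiftAction n m (FreeGroup.of i) = FreeGroup.of (i + toAdd m) := by
  simp [shiftAction]

namespace DihedralArtin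

variable (n : ℕ)

abbrev a : DihedralArtin n := PresentedGroup.of true
abbrev b : DihedralArtin n := PresentedGroup.of false

theorem mul_pow_eq : (a n * b n) ^ n = (b n * a n) ^ n := by
  have h := PresentedGroup.one_of_mem (rels := dihedralRel n) rfl
  rw [map_mul, map_inv, mul_inv_eq_one, map_pow, map_pow, map_mul, map_mul] at h
  exact h

abbrev Semidirect := FreeGroup (ZMod n) ⋊[shiftAction n] Multiplicative ℤ

def toSemidirect : DihedralArtin n →* Semidirect n :=
  PresentedGroup.toGroup
    (f := fun t => if t then inl (FreeGroup.of 0) else (inl (FreeGroup.of 0))⁻¹ * inr (ofAdd 1))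
    (by
      rintro _ rfl
      simp only [map_mul, map_inv, map_pow, FreeGroup.lift_apply_of, if_true, Bool.false_eq_true,
        if_false, mul_inv_eq_one]
      set A : Semidirect n := inl (FreeGroup.of 0)
      set T : Semidirect n := inr (ofAdd 1)
      have hconj : T ^ n * A * (T ^ n)⁻¹ = A := by
        rw [← map_pow, ← map_inv, ← inl_aut, shiftAction_apply_of]
        simp [A]
      rw [mul_inv_cancel_left, show A⁻¹ * T * A = A⁻¹ * T * A⁻¹⁻¹ by rw [inv_inv], conj_pow,
        inv_inv, mul_assoc, mul_inv_eq_iff_eq_mul.mp hconj, inv_mul_cancel_left])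

def ofSemidirect : Semidirect n →* DihedralArtin n :=
  SemidirectProduct.lift
    (FreeGroup.lift fun i => MulAut.conj ((a n * b n) ^ (i.cast : ℤ)) (a n))
    (zpowersHom _ (a n * b n)) fun g => FreeGroup.ext_hom _ _ fun i => by
      simp only [MonoidHom.comp_apply, MulEquiv.coe_toMonoidHom, shiftAction_apply_of,
        FreeGroup.lift_apply_of, zpowersHom_apply]
      rw [← MulAut.mul_apply, ← map_mul, ← zpow_add]
      refine MulAut.conj_zpow_apply_eq_of_modEq (commute_mul_pow_of_mul_pow_eq (mul_pow_eq n)) ?_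
      rw [← ZMod.intCast_eq_intCast_iff]
      push_cast [ZMod.intCast_zmod_cast]
      ring

theorem toSemidirect_injective : Function.Injective (toSemidirect n) := by
  have h : (ofSemidirect n).comp (toSemidirect n) = MonoidHom.id _ := by
    apply PresentedGroup.ext
    rintro (_ | _) <;> simp [ofSemidirect, toSemidirect]
  exact Function.LeftInverse.injective (g := ofSemidirect n) (DFunLike.congr_fun h)

end DihedralArtin

def kleinAction : Multiplicative ℤ →* MulAut (Multiplicative ℤ) :=
  zpowersHom _ (MulEquiv.inv _)

abbrev KleinModel := Multiplicative ℤ ⋊[kleinAction] Multiplicative ℤ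

theorem kleinAction_apply (g n : Multiplicative ℤ) :
    kleinAction g n = n ^ ((toAdd g).negOnePow : ℤ) :=
  MulAut.zpow_apply_of_apply_eq_inv rfl _

namespace KleinBottleGroup

abbrev x : KleinBottleGroup := PresentedGroup.of true
abbrev y : KleinBottleGroup := PresentedGroup.of false

theorem x_sq_eq_y_sq : x ^ 2 = y ^ 2 := by
  have h := PresentedGroup.one_of_mem (rels := kleinRel) rfl
  rw [map_mul, map_inv, mul_inv_eq_one] at h
  exact h

theorem conj_x_apply : MulAut.conj x (x * y⁻¹) = (x * y⁻¹)⁻¹ := by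
  have h := x_sq_eq_y_sq
  rw [pow_two, pow_two] at h
  calc MulAut.conj x (x * y⁻¹) = x * x * y⁻¹ * x⁻¹ := by rw [MulAut.conj_apply]; group
    _ = (x * y⁻¹)⁻¹ := by rw [h]; group

def ofKleinModel : KleinModel →* KleinBottleGroup :=
  SemidirectProduct.lift (zpowersHom _ (x * y⁻¹)) (zpowersHom _ x) fun g =>
    MonoidHom.ext_mint <| by
      simp only [MonoidHom.comp_apply, MulEquiv.coe_toMonoidHom, kleinAction_apply,
        zpowersHom_apply, toAdd_ofAdd, zpow_one, map_zpow]
      rw [MulAut.zpow_apply_of_apply_eq_inv conj_x_apply]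

def toKleinModel : KleinBottleGroup →* KleinModel :=
  PresentedGroup.toGroup
    (f := fun t => if t then inr (ofAdd 1) else (inl (ofAdd 1))⁻¹ * inr (ofAdd 1))
    (by
      rintro _ rfl
      simp only [map_mul, map_inv, map_pow, FreeGroup.lift_apply_of, if_true, Bool.false_eq_true,
        if_false, mul_inv_eq_one]
      set T : KleinModel := inr (ofAdd 1)
      set U : KleinModel := inl (ofAdd 1)
      have h : T * U⁻¹ * T⁻¹ = U := by
        rw [← map_inv, ← map_inv inr, ← inl_aut, kleinAction_apply]
        simp [U]
      calc T ^ 2 = U⁻¹ * U * T ^ 2 := by group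
        _ = U⁻¹ * (T * U⁻¹ * T⁻¹) * T ^ 2 := by rw [h]
        _ = (U⁻¹ * T) ^ 2 := by rw [pow_two, pow_two]; group)

theorem ofKleinModel_injective : Function.Injective ofKleinModel := by
  have h : toKleinModel.comp ofKleinModel = MonoidHom.id _ := by
    apply SemidirectProduct.hom_ext <;> apply MonoidHom.ext_mint <;>
      simp [ofKleinModel, toKleinModel]
  exact Function.LeftInverse.injective (g := toKleinModel) (DFunLike.congr_fun h)

end KleinBottleGroup

theorem exists_injective_kleinModel_of_semidirectProduct
    (φ : Multiplicative ℤ →* MulAut (Multiplicative ℤ)) :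
    ∃ θ : Multiplicative ℤ ⋊[φ] Multiplicative ℤ →* KleinModel, Function.Injective θ := by
  rcases MulAut.eq_one_or_eq_inv_of_multiplicativeInt (φ (ofAdd 1)) with h | h
  · obtain rfl : φ = 1 := MonoidHom.ext_mint h
    have hsq (g : Multiplicative ℤ) : kleinAction (g ^ 2) = 1 := MulEquiv.ext fun n => by
      rw [kleinAction_apply, toAdd_pow, nsmul_eq_mul, Nat.cast_ofNat, Int.negOnePow_two_mul]
      simp
    -- `ℤ × ℤ` is the index-two subgroup `ℤ ⋊ 2ℤ`, on which the negation action is trivial.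
    exact ⟨map (MonoidHom.id _) (powMonoidHom 2) (by simp [hsq]),
      map_injective Function.injective_id (pow_left_injective two_ne_zero) _⟩
  · obtain rfl : φ = kleinAction := MonoidHom.ext_mint h
    exact ⟨MonoidHom.id _, Function.injective_id⟩

theorem exists_injective_kleinModel_of_surjective {Γ : Type*} [Group Γ]
    (k : Γ →* Multiplicative ℤ) (hk : Function.Surjective k) (χ : k.ker ≃* Multiplicative ℤ) :
    ∃ θ : Γ →* KleinModel, Function.Injective θ := by
  obtain ⟨h₀, hh₀⟩ := hk (ofAdd 1)
  have hs : Function.RightInverse (zpowersHom Γ h₀) k := fun g => by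
    simp [hh₀, ← ofAdd_zsmul]
  let e := (k.semidirectProductKerEquiv _ hs).symm.trans (SemidirectProduct.congr' χ (.refl _))
  obtain ⟨θ, hθ⟩ := exists_injective_kleinModel_of_semidirectProduct _
  exact ⟨θ.comp e.toMonoidHom, hθ.comp e.injective⟩

theorem exists_injective_kleinModel {Γ X : Type*} [Group Γ] (r : Γ →* Multiplicative ℤ)
    (ι : r.ker →* FreeGroup X) (hι : Function.Injective ι)
    (hfree : ¬ ∃ f : FreeGroup Bool →* Γ, Function.Injective f) :
    ∃ θ : Γ →* KleinModel, Function.Injective θ := by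
  have hfree_ker : ¬ ∃ f : FreeGroup Bool →* r.ker, Function.Injective f := fun ⟨f, hf⟩ =>
    hfree ⟨r.ker.subtype.comp f, r.ker.subtype_injective.comp hf⟩
  rcases subsingleton_or_nonempty_mulEquiv_int_of_injective_freeGroup ι hι hfree_ker with
    hker | hχ
  · have hr : Function.Injective r :=
      (MonoidHom.ker_eq_bot_iff r).1 (Subgroup.eq_bot_of_subsingleton _)
    exact ⟨inr.comp r, inr_injective.comp hr⟩
  obtain ⟨χ⟩ := hχ
  by_cases hrange : r.range = ⊥
  · have hmem (x : Γ) : x ∈ r.ker := by simp [MonoidHom.range_eq_bot_iff.1 hrange]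
    let toKer := (MonoidHom.id Γ).codRestrict r.ker hmem
    exact ⟨inl.comp (χ.toMonoidHom.comp toKer),
      inl_injective.comp (χ.injective.comp fun _ _ h => congrArg Subtype.val h)⟩
  · have : Nontrivial r.range := (Subgroup.nontrivial_iff_ne_bot _).2 hrange
    obtain ⟨e⟩ := LinearOrderedCommGroup.isCyclic_iff_nonempty_equiv_int.1
      (inferInstance : IsCyclic r.range)
    let k := e.toMulEquiv.toMonoidHom.comp r.rangeRestrict
    have hker : k.ker = r.ker := by simp [k, MonoidHom.ker_rangeRestrict]
    exact exists_injective_kleinModel_of_surjective k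
      (e.surjective.comp r.rangeRestrict_surjective) ((MulEquiv.subgroupCongr hker).trans χ)

theorem subgroup_dihedralArtin_no_free_embeds_klein_general (n : ℕ)
    (H : Subgroup (DihedralArtin n))
    (hfree : ¬ ∃ f : FreeGroup Bool →* H, Function.Injective f) :
    ∃ L : Subgroup KleinBottleGroup, Nonempty (H ≃* L) := by
  obtain ⟨ι, hι⟩ := SemidirectProduct.exists_injective_ker_rightHom_comp
    ((DihedralArtin.toSemidirect n).comp H.subtype)
    ((DihedralArtin.toSemidirect_injective n).comp H.subtype_injective)
  obtain ⟨θ, hθ⟩ := exists_injective_kleinModel _ ι hι hfree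
  exact ⟨_, ⟨MonoidHom.ofInjective (f := KleinBottleGroup.ofKleinModel.comp θ)
    (KleinBottleGroup.ofKleinModel_injective.comp hθ)⟩⟩

/-- Every subgroup of `D_{2n}` not containing a non-abelian free subgroup is isomorphic
to a subgroup of the Klein bottle group `K = ⟨x, y ∣ x² = y²⟩`. -/
theorem subgroup_dihedralArtin_no_free_embeds_klein (n : ℕ) (hn : 2 ≤ n)
    (H : Subgroup (DihedralArtin n))
    (hfree : ¬ ∃ f : FreeGroup Bool →* H, Function.Injective f) :
    ∃ L : Subgroup KleinBottleGroup, Nonempty (H ≃* L) :=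
  subgroup_dihedralArtin_no_free_embeds_klein_general n H hfree
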